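/- arXiv:2306.09276 — 2 statements merged into one kernel-verified Lean document; each statement's English description precedes it below -/
import Mathlib

section
/- If the center tile of a corner-connection knot mosaic of size 3 (the cell in position (1,1)) is a crossing tile, then the mosaic contains at most 3 crossing tiles, and either all crossing tiles lie in the middle row or all crossing tiles lie in the middle column. -/
/-- The eleven corner-connection tile types. -/
inductive Tile : Type
  | T0 | T1 | T2 | T3 | T4 | T5 | T6 | T7 | T8 | T9 | T10
  deriving DecidableEq

open Tile

/-- `cp t a b = true` iff tile `t` has a connection point at the corner of its cell
with vertical offset `a` (`false` = top, `true` = bottom) and horizontal offset `b`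
(`false` = left, `true` = right).  `T0` is blank; `T1`–`T4` are the single-arc tiles
(connection points at the two corners of one side, the four sides in order top,
bottom, left, right); `T5`, `T6` are the diagonal segment tiles ({TL, BR} and
{TR, BL}); `T7`–`T10` (double arcs and crossings) use all four corners. -/
def cp : Tile → Bool → Bool → Bool
  | T0, _, _ => false
  | T1, a, _ => !a
  | T2, a, _ => a
  | T3, _, b => !b
  | T4, _, b => b
  | T5, a, b => a == b
  | T6, a, b => a != b
  | _, _, _ => true

/-- Crossing tiles. -/
def isCrossing : Tile → Bool
  | T9 | T10 => true
  | _ => false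

/-- Tiles with four connection points. -/
def isFourCP : Tile → Bool
  | T7 | T8 | T9 | T10 => true
  | _ => false

/-- Double-arc tiles. -/
def isDoubleArc : Tile → Bool
  | T7 | T8 => true
  | _ => false

/-- The number of connection-point incidences at the grid vertex `(r, c)`:
the number of cells incident to this vertex whose tile has a connection point
at the corresponding corner.  (The cell incident to `(r, c)` via its corner
with offsets `(a, b)` is the cell `(r - a, c - b)`, which exists iff `a ≤ r`
and `b ≤ c`.) -/
def vertexCount (M : ℕ → ℕ → Tile) (r c : ℕ) : ℕ :=
  ∑ p : Bool × Bool,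
    if p.1.toNat ≤ r ∧ p.2.toNat ≤ c ∧
        cp (M (r - p.1.toNat) (c - p.2.toNat)) p.1 p.2 = true
    then 1 else 0

/-- A corner-connection knot mosaic with `m` rows and `n` columns: a tiling of the
`m × n` grid (cells outside the grid are blank) that is suitably connected with no
triple points, i.e. every vertex of the `(m+1) × (n+1)` grid of cell corners has
exactly 0 or 2 connection-point incidences. -/
def IsKnotMosaicRect (m n : ℕ) (M : ℕ → ℕ → Tile) : Prop :=
  (∀ i j, m ≤ i ∨ n ≤ j → M i j = Tile.T0) ∧
  (∀ r c, r ≤ m → c ≤ n → vertexCount M r c = 0 ∨ vertexCount M r c = 2)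

/-- A corner-connection knot `n`-mosaic (square, `n` rows and `n` columns). -/
def IsKnotMosaic (n : ℕ) (M : ℕ → ℕ → Tile) : Prop :=
  IsKnotMosaicRect n n M

/-- The number of crossing tiles in the `m × n` grid. -/
def crossingCountRect (m n : ℕ) (M : ℕ → ℕ → Tile) : ℕ :=
  ((Finset.range m ×ˢ Finset.range n).filter
    (fun p => isCrossing (M p.1 p.2) = true)).card

/-- The number of crossing tiles in the `n × n` grid. -/
def crossingCount (n : ℕ) (M : ℕ → ℕ → Tile) : ℕ :=
  crossingCountRect n n M

/-!
The center crossing has a connection point at each of the four inner vertices of the 3-mosaic, and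
a vertex carries at most two incidences, so a crossing directly above or below the center and one
directly beside it would meet the center in three incidences at a common inner vertex. The corner
cells carry no crossing, since each outer corner of the grid has a single incident cell. Hence all
crossings lie in the middle row or all in the middle column, and there are at most three.
-/

theorem cp_eq_true_of_isFourCP {t : Tile} (ht : isFourCP t = true) (a b : Bool) :
    cp t a b = true := by
  cases t <;> simp_all [isFourCP, cp]

theorem isFourCP_of_isCrossing {t : Tile} (ht : isCrossing t = true) : isFourCP t = true := by
  cases t <;> simp_all [isFourCP, isCrossing]

theorem isCrossing_eq_false_of_cp_eq_false {t : Tile} {a b : Bool} (h : cp t a b = false) :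
    isCrossing t = false := by
  cases t <;> cases a <;> cases b <;> simp_all [isCrossing, cp]

section vertexCount

variable (M : ℕ → ℕ → Tile) (r c : ℕ)

theorem vertexCount_zero_zero : vertexCount M 0 0 = (cp (M 0 0) false false).toNat := by
  simp [vertexCount, Fintype.sum_prod_type, Bool.toNat, Bool.cond_eq_ite, -Finset.sum_boole]

theorem vertexCount_zero_succ :
    vertexCount M 0 (c + 1) =
      (cp (M 0 c) false true).toNat + (cp (M 0 (c + 1)) false false).toNat := by
  simp [vertexCount, Fintype.sum_prod_type, Bool.toNat, Bool.cond_eq_ite, -Finset.sum_boole]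

theorem vertexCount_succ_zero :
    vertexCount M (r + 1) 0 =
      (cp (M r 0) true false).toNat + (cp (M (r + 1) 0) false false).toNat := by
  simp [vertexCount, Fintype.sum_prod_type, Bool.toNat, Bool.cond_eq_ite, -Finset.sum_boole]

theorem vertexCount_succ_succ :
    vertexCount M (r + 1) (c + 1) =
      (cp (M r c) true true).toNat + (cp (M r (c + 1)) true false).toNat +
        (cp (M (r + 1) c) false true).toNat + (cp (M (r + 1) (c + 1)) false false).toNat := by
  simp [vertexCount, Fintype.sum_prod_type, Bool.toNat, Bool.cond_eq_ite, -Finset.sum_boole]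
  ac_rfl

end vertexCount

namespace IsKnotMosaicRect

variable {m n : ℕ} {M : ℕ → ℕ → Tile}

theorem vertexCount_le_two (hM : IsKnotMosaicRect m n M) {r c : ℕ} (hr : r ≤ m) (hc : c ≤ n) :
    vertexCount M r c ≤ 2 := by
  rcases hM.2 r c hr hc with h | h <;> omega

theorem vertexCount_eq_zero_of_le_one (hM : IsKnotMosaicRect m n M) {r c : ℕ} (hr : r ≤ m)
    (hc : c ≤ n) (h : vertexCount M r c ≤ 1) : vertexCount M r c = 0 := by
  rcases hM.2 r c hr hc with h' | h' <;> omega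

theorem cp_top_left (hM : IsKnotMosaicRect m n M) : cp (M 0 0) false false = false := by
  have h := hM.vertexCount_eq_zero_of_le_one (Nat.zero_le m) (Nat.zero_le n)
  rw [vertexCount_zero_zero] at h
  simpa using h (Bool.toNat_le _)

theorem cp_top_right (hM : IsKnotMosaicRect m (n + 1) M) : cp (M 0 n) false true = false := by
  have h := hM.vertexCount_eq_zero_of_le_one (Nat.zero_le m) le_rfl
  rw [vertexCount_zero_succ, hM.1 0 (n + 1) (Or.inr le_rfl), cp.eq_1, Bool.toNat_false,
    add_zero] at h
  simpa using h (Bool.toNat_le _)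

theorem cp_bottom_left (hM : IsKnotMosaicRect (m + 1) n M) : cp (M m 0) true false = false := by
  have h := hM.vertexCount_eq_zero_of_le_one le_rfl (Nat.zero_le n)
  rw [vertexCount_succ_zero, hM.1 (m + 1) 0 (Or.inl le_rfl), cp.eq_1, Bool.toNat_false,
    add_zero] at h
  simpa using h (Bool.toNat_le _)

theorem cp_bottom_right (hM : IsKnotMosaicRect (m + 1) (n + 1) M) :
    cp (M m n) true true = false := by
  have h := hM.vertexCount_eq_zero_of_le_one le_rfl le_rfl
  rw [vertexCount_succ_succ, hM.1 (m + 1) _ (Or.inl le_rfl), hM.1 (m + 1) _ (Or.inl le_rfl),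
    hM.1 m (n + 1) (Or.inr le_rfl), cp.eq_1, cp.eq_1, cp.eq_1] at h
  simpa using h (Bool.toNat_le _)

theorem isFourCP_toNat_sum_le_two (hM : IsKnotMosaicRect m n M) {r c : ℕ} (hr : r + 1 ≤ m)
    (hc : c + 1 ≤ n) :
    (isFourCP (M r c)).toNat + (isFourCP (M r (c + 1))).toNat +
      (isFourCP (M (r + 1) c)).toNat + (isFourCP (M (r + 1) (c + 1))).toNat ≤ 2 := by
  have hle : ∀ t a b, (isFourCP t).toNat ≤ (cp t a b).toNat := fun t a b => by
    cases h : isFourCP t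
    · simp
    · simp [cp_eq_true_of_isFourCP h]
  have := hM.vertexCount_le_two hr hc
  rw [vertexCount_succ_succ] at this
  linarith [hle (M r c) true true, hle (M r (c + 1)) true false, hle (M (r + 1) c) false true,
    hle (M (r + 1) (c + 1)) false false]

end IsKnotMosaicRect

section crossingCount

variable {m n : ℕ} {M : ℕ → ℕ → Tile}

theorem crossingCountRect_le_of_forall_row_eq {k : ℕ}
    (h : ∀ i j, i < m → j < n → isCrossing (M i j) = true → i = k) :
    crossingCountRect m n M ≤ n := by
  calc crossingCountRect m n M ≤ ({k} ×ˢ Finset.range n).card := by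
        refine Finset.card_le_card fun p hp => ?_
        simp only [Finset.mem_filter, Finset.mem_product, Finset.mem_range] at hp
        exact Finset.mem_product.2
          ⟨Finset.mem_singleton.2 (h p.1 p.2 hp.1.1 hp.1.2 hp.2), Finset.mem_range.2 hp.1.2⟩
    _ = n := by simp

theorem crossingCountRect_le_of_forall_col_eq {k : ℕ}
    (h : ∀ i j, i < m → j < n → isCrossing (M i j) = true → j = k) :
    crossingCountRect m n M ≤ m := by
  calc crossingCountRect m n M ≤ (Finset.range m ×ˢ {k}).card := by
        refine Finset.card_le_card fun p hp => ?_
        simp only [Finset.mem_filter, Finset.mem_product, Finset.mem_range] at hp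
        exact Finset.mem_product.2
          ⟨Finset.mem_range.2 hp.1.1, Finset.mem_singleton.2 (h p.1 p.2 hp.1.1 hp.1.2 hp.2)⟩
    _ = m := by simp

end crossingCount

theorem IsKnotMosaic.crossings_in_middle_row_or_column {M : ℕ → ℕ → Tile}
    (hM : IsKnotMosaic 3 M) (hcenter : isCrossing (M 1 1) = true) :
    (∀ i j, i < 3 → j < 3 → isCrossing (M i j) = true → i = 1) ∨
    (∀ i j, i < 3 → j < 3 → isCrossing (M i j) = true → j = 1) := by
  have hM : IsKnotMosaicRect (2 + 1) (2 + 1) M := hM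
  have h00 := isCrossing_eq_false_of_cp_eq_false hM.cp_top_left
  have h02 := isCrossing_eq_false_of_cp_eq_false hM.cp_top_right
  have h20 := isCrossing_eq_false_of_cp_eq_false hM.cp_bottom_left
  have h22 := isCrossing_eq_false_of_cp_eq_false hM.cp_bottom_right
  have hcenter' := isFourCP_of_isCrossing hcenter
  have hv11 := hM.isFourCP_toNat_sum_le_two (r := 0) (c := 0) (by norm_num) (by norm_num)
  have hv12 := hM.isFourCP_toNat_sum_le_two (r := 0) (c := 1) (by norm_num) (by norm_num)
  have hv21 := hM.isFourCP_toNat_sum_le_two (r := 1) (c := 0) (by norm_num) (by norm_num)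
  have hv22 := hM.isFourCP_toNat_sum_le_two (r := 1) (c := 1) (by norm_num) (by norm_num)
  by_cases hvert : isCrossing (M 0 1) = true ∨ isCrossing (M 2 1) = true
  · have hhor : isCrossing (M 1 0) = false ∧ isCrossing (M 1 2) = false := by
      simp only [← Bool.not_eq_true]
      constructor <;> intro hh <;> rcases hvert with hv | hv <;>
        simp only [isFourCP_of_isCrossing hv, isFourCP_of_isCrossing hh, hcenter',
          Bool.toNat_true] at hv11 hv12 hv21 hv22 <;>
        omega
    right
    intro i j hi hj hx
    interval_cases i <;> interval_cases j <;> simp_all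
  · left
    intro i j hi hj hx
    interval_cases i <;> interval_cases j <;> simp_all

/-- If the center tile of a corner-connection knot 3-mosaic is a crossing tile,
then the mosaic contains at most 3 crossing tiles, and either all crossing tiles
lie in the middle row or all crossing tiles lie in the middle column. -/
theorem three_mosaic_center_crossing
    (M : ℕ → ℕ → Tile) (hM : IsKnotMosaic 3 M)
    (hcenter : isCrossing (M 1 1) = true) :
    crossingCount 3 M ≤ 3 ∧
    ((∀ i j, i < 3 → j < 3 → isCrossing (M i j) = true → i = 1) ∨
     (∀ i j, i < 3 → j < 3 → isCrossing (M i j) = true → j = 1)) := by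
  have hline := hM.crossings_in_middle_row_or_column hcenter
  refine ⟨?_, hline⟩
  rcases hline with hrow | hcol
  · exact crossingCountRect_le_of_forall_row_eq hrow
  · exact crossingCountRect_le_of_forall_col_eq hcol
end

section
/- For any odd n ≥ 3, the number of crossing tiles in a corner-connection knot mosaic of size n is at most (n² + n − 4)/2. -/
open Tile

/-!
A crossing tile has connection points at all four corners and a vertex carries at most two
incidences, so at most two crossing cells share a corner. Write `n = 2k + 1`. Every cell has
exactly one corner with both coordinates odd and one with both coordinates even. Charge a
crossing cell to its odd corner when that corner satisfies `x + y < n`, and otherwise to its even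
corner when that corner satisfies `x + y > n`. The vertices charged this way can be indexed by a
`k × (k + 1)` rectangle, so at most `2k(k + 1)` crossings are charged. The cells charged to
neither corner are the cells `(i, 2k - i)` with `i` even. At either end of this row the cell is a
corner cell of the mosaic, and it cannot hold a crossing because the outer corner of the grid
meets no other cell. That leaves at most `k - 1` such crossings, and
`2k(k + 1) + k - 1 = (n² + n - 4) / 2`.
-/

open Finset

lemma cp_of_isCrossing {t : Tile} (h : isCrossing t = true) (a b : Bool) : cp t a b = true := by
  cases t <;> simp_all [isCrossing, cp]

lemma cp_T0 (a b : Bool) : cp T0 a b = false := rfl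

def IsCellCorner (v q : ℕ × ℕ) : Prop :=
  q.1 ≤ v.1 ∧ v.1 ≤ q.1 + 1 ∧ q.2 ≤ v.2 ∧ v.2 ≤ q.2 + 1

lemma exists_bool_sub_toNat {i r : ℕ} (h₁ : i ≤ r) (h₂ : r ≤ i + 1) :
    ∃ a : Bool, a.toNat ≤ r ∧ r - a.toNat = i := by
  rcases (show r = i ∨ r = i + 1 by omega) with rfl | rfl
  exacts [⟨false, by simp⟩, ⟨true, by simp⟩]

namespace IsKnotMosaicRect

variable {m n : ℕ} {M : ℕ → ℕ → Tile}

lemma lt_of_isCrossing (hM : IsKnotMosaicRect m n M) {i j : ℕ}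
    (h : isCrossing (M i j) = true) : i < m ∧ j < n := by
  by_contra hout
  rw [hM.1 i j (by omega)] at h
  exact Bool.false_ne_true h

lemma card_le_two_of_isCellCorner (hM : IsKnotMosaicRect m n M)
    (v : ℕ × ℕ) (S : Finset (ℕ × ℕ))
    (hS : ∀ q ∈ S, isCrossing (M q.1 q.2) = true ∧ IsCellCorner v q) : #S ≤ 2 := by
  obtain rfl | ⟨q₀, hq₀⟩ := S.eq_empty_or_nonempty
  · simp
  have hv : v.1 ≤ m ∧ v.2 ≤ n := by
    obtain ⟨hcross, hcorner⟩ := hS q₀ hq₀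
    have := hM.lt_of_isCrossing hcross
    unfold IsCellCorner at hcorner
    omega
  set P := univ.filter fun p : Bool × Bool => p.1.toNat ≤ v.1 ∧ p.2.toNat ≤ v.2 ∧
    cp (M (v.1 - p.1.toNat) (v.2 - p.2.toNat)) p.1 p.2 = true
  have hP : #P ≤ 2 := by
    have hcount : vertexCount M v.1 v.2 = #P := by simp [vertexCount, P, sum_boole]
    rcases hM.2 v.1 v.2 hv.1 hv.2 with h | h <;> omega
  have hsub : S ⊆ P.image fun p => (v.1 - p.1.toNat, v.2 - p.2.toNat) := by
    intro q hq
    obtain ⟨hcross, h₁, h₂, h₃, h₄⟩ := hS q hq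
    obtain ⟨a, ha, hqa⟩ := exists_bool_sub_toNat h₁ h₂
    obtain ⟨b, hb, hqb⟩ := exists_bool_sub_toNat h₃ h₄
    refine mem_image.2 ⟨(a, b), ?_, by rw [hqa, hqb]⟩
    simp only [P, mem_filter, mem_univ, true_and]
    exact ⟨ha, hb, by rw [hqa, hqb]; exact cp_of_isCrossing hcross a b⟩
  exact (card_le_card hsub).trans (card_image_le.trans hP)

lemma isCrossing_top_right (hM : IsKnotMosaicRect m n M) :
    isCrossing (M 0 (n - 1)) = false := by
  rcases Nat.eq_zero_or_pos n with rfl | hn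
  · rw [hM.1 0 0 (Or.inr le_rfl)]; rfl
  by_contra h
  have hcp := cp_of_isCrossing (Bool.not_eq_false _ ▸ h) false true
  have hv := hM.2 0 n (Nat.zero_le _) le_rfl
  simp only [vertexCount, Fintype.sum_prod_type, Fintype.sum_bool] at hv
  simp [hM.1 0 n (Or.inr le_rfl), hcp, cp_T0, Nat.one_le_iff_ne_zero, hn.ne'] at hv

lemma isCrossing_bottom_left (hM : IsKnotMosaicRect m n M) :
    isCrossing (M (m - 1) 0) = false := by
  rcases Nat.eq_zero_or_pos m with rfl | hm
  · rw [hM.1 0 0 (Or.inl le_rfl)]; rfl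
  by_contra h
  have hcp := cp_of_isCrossing (Bool.not_eq_false _ ▸ h) true false
  have hv := hM.2 m 0 le_rfl (Nat.zero_le _)
  simp only [vertexCount, Fintype.sum_prod_type, Fintype.sum_bool] at hv
  simp [hM.1 m 0 (Or.inl le_rfl), hcp, cp_T0, Nat.one_le_iff_ne_zero, hm.ne'] at hv

end IsKnotMosaicRect

def crossingCells (n : ℕ) (M : ℕ → ℕ → Tile) : Finset (ℕ × ℕ) :=
  {q ∈ range n ×ˢ range n | isCrossing (M q.1 q.2) = true}

def chargeIndex (k : ℕ) (q : ℕ × ℕ) : ℕ × ℕ :=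
  if q.1 / 2 + q.2 / 2 < k then (q.1 / 2, q.2 / 2) else ((q.1 + 1) / 2 - 1, (q.2 + 1) / 2)

def chargeVertex (k : ℕ) (p : ℕ × ℕ) : ℕ × ℕ :=
  if p.1 + p.2 < k then (2 * p.1 + 1, 2 * p.2 + 1) else (2 * p.1 + 2, 2 * p.2)

section Charging

variable {k : ℕ} {q : ℕ × ℕ}

lemma chargeIndex_mem (h₁ : q.1 < 2 * k + 1) (h₂ : q.2 < 2 * k + 1)
    (hq : ¬(Even q.1 ∧ q.1 + q.2 = 2 * k)) : chargeIndex k q ∈ range k ×ˢ range (k + 1) := by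
  rw [Nat.even_iff] at hq
  simp only [chargeIndex, mem_product, mem_range]
  split_ifs <;> omega

lemma isCellCorner_chargeVertex_chargeIndex (h₂ : q.2 < 2 * k + 1)
    (hq : ¬(Even q.1 ∧ q.1 + q.2 = 2 * k)) : IsCellCorner (chargeVertex k (chargeIndex k q)) q := by
  rw [Nat.even_iff] at hq
  unfold chargeIndex
  split_ifs with h <;> simp only [chargeVertex, IsCellCorner] <;> split_ifs <;> omega

end Charging

variable {k : ℕ} {M : ℕ → ℕ → Tile}

lemma card_crossingCells_filter_antidiagonal_le (hM : IsKnotMosaic (2 * k + 1) M) :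
    #{q ∈ crossingCells (2 * k + 1) M | Even q.1 ∧ q.1 + q.2 = 2 * k} ≤ k - 1 := by
  have hcorner₁ := hM.isCrossing_top_right
  have hcorner₂ := hM.isCrossing_bottom_left
  simp only [Nat.add_sub_cancel] at hcorner₁ hcorner₂
  refine (card_le_card_of_injOn (fun q => q.1 / 2) (t := Ioo 0 k) ?_ ?_).trans
    (by simp)
  · intro q hq
    simp only [coe_filter, crossingCells, mem_filter, Nat.even_iff] at hq
    obtain ⟨⟨-, hcross⟩, heven, hsum⟩ := hq
    have h0 : q.1 ≠ 0 := fun h => by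
      rw [show q = (0, 2 * k) by ext <;> simp <;> omega, hcorner₁] at hcross
      exact Bool.false_ne_true hcross
    have h2k : q.1 ≠ 2 * k := fun h => by
      rw [show q = (2 * k, 0) by ext <;> simp <;> omega, hcorner₂] at hcross
      exact Bool.false_ne_true hcross
    simp only [coe_Ioo, Set.mem_Ioo]
    omega
  · intro q hq q' hq' h
    simp only [mem_coe, mem_filter, Nat.even_iff] at hq hq'
    simp only at h
    ext <;> omega

lemma card_crossingCells_filter_not_antidiagonal_le (hM : IsKnotMosaic (2 * k + 1) M) :
    #{q ∈ crossingCells (2 * k + 1) M | ¬(Even q.1 ∧ q.1 + q.2 = 2 * k)} ≤ 2 * (k * (k + 1)) := by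
  have hmaps : ∀ q ∈ {q ∈ crossingCells (2 * k + 1) M | ¬(Even q.1 ∧ q.1 + q.2 = 2 * k)},
      chargeIndex k q ∈ range k ×ˢ range (k + 1) := by
    intro q hq
    simp only [crossingCells, mem_filter, mem_product, mem_range] at hq
    exact chargeIndex_mem hq.1.1.1 hq.1.1.2 hq.2
  refine (card_le_mul_card_image_of_maps_to hmaps 2 fun p _ => ?_).trans (by simp)
  refine hM.card_le_two_of_isCellCorner (chargeVertex k p) _ fun q hq => ?_
  simp only [crossingCells, mem_filter, mem_product, mem_range] at hq
  obtain ⟨⟨⟨⟨-, h₂⟩, hcross⟩, hq⟩, rfl⟩ := hq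
  exact ⟨hcross, isCellCorner_chargeVertex_chargeIndex h₂ hq⟩

lemma crossing_bound_odd_eq (k : ℕ) :
    ((2 * k + 1) ^ 2 + (2 * k + 1) - 4) / 2 = 2 * (k * (k + 1)) + (k - 1) := by
  obtain _ | k := k
  · rfl
  have h : (2 * (k + 1) + 1) ^ 2 = 4 * ((k + 1) * (k + 1 + 1)) + 1 := by ring
  omega

theorem max_crossings_odd_general
    (n : ℕ) (hpar : Odd n)
    (M : ℕ → ℕ → Tile) (hM : IsKnotMosaic n M) :
    crossingCount n M ≤ (n ^ 2 + n - 4) / 2 := by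
  obtain ⟨k, rfl⟩ := hpar
  rw [crossing_bound_odd_eq, crossingCount, crossingCountRect, ← crossingCells,
    ← card_filter_add_card_filter_not (fun q : ℕ × ℕ => Even q.1 ∧ q.1 + q.2 = 2 * k)]
  exact add_comm (k - 1) _ ▸ add_le_add (card_crossingCells_filter_antidiagonal_le hM)
    (card_crossingCells_filter_not_antidiagonal_le hM)

/-- For any odd `n ≥ 3`, a corner-connection knot `n`-mosaic has at most
`(n² + n − 4) / 2` crossing tiles. -/
theorem max_crossings_odd
    (n : ℕ) (hn : 3 ≤ n) (hpar : Odd n)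
    (M : ℕ → ℕ → Tile) (hM : IsKnotMosaic n M) :
    crossingCount n M ≤ (n ^ 2 + n - 4) / 2 :=
  max_crossings_odd_general n hpar M hM
end
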